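/- For the ℝ^{2,1} Weierstrass representation with ∂ψ/∂z = pφ, ∂φ/∂z̄ = pψ (p real) and coordinates defined by d(X¹+iX²) = φ² dz + ψ² dz̄, dX⁴ = ψ̄φ dz + ψφ̄ dz̄, one has: the 1-forms are closed, g_{zz} = g_{z̄z̄} = 0, and g_{zz̄} = (1/2)(|ψ|² - |φ|²)² for the inner product ⟨a,b⟩ = a₁b₁ + a₂b₂ - a₃b₃ on ℝ^{2,1}. -/

import Mathlib

open Complex

/-- Partial derivative in the x-direction. -/
noncomputable def dX (f : ℝ × ℝ → ℂ) (w : ℝ × ℝ) : ℂ := fderiv ℝ f w (1, 0)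

/-- Partial derivative in the y-direction. -/
noncomputable def dY (f : ℝ × ℝ → ℂ) (w : ℝ × ℝ) : ℂ := fderiv ℝ f w (0, 1)

/-- Wirtinger derivative ∂/∂z = (∂ₓ - i ∂_y)/2. -/
noncomputable def Wz (f : ℝ × ℝ → ℂ) : ℝ × ℝ → ℂ := fun w => (dX f w - Complex.I * dY f w) / 2

/-- Wirtinger derivative ∂/∂z̄ = (∂ₓ + i ∂_y)/2. -/
noncomputable def Wzb (f : ℝ × ℝ → ℂ) : ℝ × ℝ → ℂ := fun w => (dX f w + Complex.I * dY f w) / 2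

private lemma fderiv_mul_apply (f g : ℝ × ℝ → ℂ) (hf : Differentiable ℝ f)
    (hg : Differentiable ℝ g) (w : ℝ × ℝ) (v : ℝ × ℝ) :
    fderiv ℝ (fun y => f y * g y) w v = f w * fderiv ℝ g w v + g w * fderiv ℝ f w v := by
  rw [fderiv_fun_mul (hf w) (hg w)]
  simp [smul_eq_mul]

private lemma Wz_mul (f g : ℝ × ℝ → ℂ) (hf : Differentiable ℝ f) (hg : Differentiable ℝ g)
    (w : ℝ × ℝ) : Wz (fun v => f v * g v) w = Wz f w * g w + f w * Wz g w := by
  simp only [Wz, dX, dY, fderiv_mul_apply f g hf hg]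
  ring

private lemma Wzb_mul (f g : ℝ × ℝ → ℂ) (hf : Differentiable ℝ f) (hg : Differentiable ℝ g)
    (w : ℝ × ℝ) : Wzb (fun v => f v * g v) w = Wzb f w * g w + f w * Wzb g w := by
  simp only [Wzb, dX, dY, fderiv_mul_apply f g hf hg]
  ring

private lemma fderiv_conj_apply (f : ℝ × ℝ → ℂ) (hf : Differentiable ℝ f) (w v : ℝ × ℝ) :
    fderiv ℝ (fun y => (starRingEnd ℂ) (f y)) w v = (starRingEnd ℂ) (fderiv ℝ f w v) := by
  have h : (fun y => (starRingEnd ℂ) (f y)) = (Complex.conjCLE : ℂ → ℂ) ∘ f := rfl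
  rw [h, fderiv_comp w Complex.conjCLE.differentiableAt (hf w)]
  simp only [ContinuousLinearMap.coe_comp', Function.comp_apply, ContinuousLinearEquiv.fderiv]
  rfl

private lemma Wz_conj (f : ℝ × ℝ → ℂ) (hf : Differentiable ℝ f) (w : ℝ × ℝ) :
    Wz (fun v => (starRingEnd ℂ) (f v)) w = (starRingEnd ℂ) (Wzb f w) := by
  simp only [Wz, Wzb, dX, dY, fderiv_conj_apply f hf, map_div₀, map_add, map_mul,
    Complex.conj_I, map_ofNat]
  ring

private lemma Wzb_conj (f : ℝ × ℝ → ℂ) (hf : Differentiable ℝ f) (w : ℝ × ℝ) :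
    Wzb (fun v => (starRingEnd ℂ) (f v)) w = (starRingEnd ℂ) (Wz f w) := by
  simp only [Wz, Wzb, dX, dY, fderiv_conj_apply f hf, map_div₀, map_add, map_sub, map_mul,
    Complex.conj_I, map_ofNat]
  ring

private lemma Wz_add_I (f g : ℝ × ℝ → ℂ) (hf : Differentiable ℝ f) (hg : Differentiable ℝ g)
    (w : ℝ × ℝ) : Wz (fun v => f v + Complex.I * g v) w = Wz f w + Complex.I * Wz g w := by
  have h : ∀ v : ℝ × ℝ,
      fderiv ℝ (fun y => f y + Complex.I * g y) w v
        = fderiv ℝ f w v + Complex.I * fderiv ℝ g w v := by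
    intro v
    rw [fderiv_fun_add (hf w) ((hg w).const_mul _), fderiv_const_mul (hg w)]
    simp [smul_eq_mul]
  simp only [Wz, dX, dY, h]
  ring

private lemma Wzb_add_I (f g : ℝ × ℝ → ℂ) (hf : Differentiable ℝ f) (hg : Differentiable ℝ g)
    (w : ℝ × ℝ) : Wzb (fun v => f v + Complex.I * g v) w = Wzb f w + Complex.I * Wzb g w := by
  have h : ∀ v : ℝ × ℝ,
      fderiv ℝ (fun y => f y + Complex.I * g y) w v
        = fderiv ℝ f w v + Complex.I * fderiv ℝ g w v := by
    intro v
    rw [fderiv_fun_add (hf w) ((hg w).const_mul _), fderiv_const_mul (hg w)]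
    simp [smul_eq_mul]
  simp only [Wzb, dX, dY, h]
  ring

theorem stmt_14 (ψ φ : ℝ × ℝ → ℂ) (p : ℝ × ℝ → ℝ) (X : Fin 3 → ℝ × ℝ → ℝ)
    (hψ : ContDiff ℝ (⊤ : ℕ∞) ψ) (hφ : ContDiff ℝ (⊤ : ℕ∞) φ) (hp : ContDiff ℝ (⊤ : ℕ∞) p)
    (hX : ∀ i, ContDiff ℝ (⊤ : ℕ∞) (X i))
    (h1 : ∀ w, Wz ψ w = (p w : ℂ) * φ w)
    (h2 : ∀ w, Wzb φ w = (p w : ℂ) * ψ w)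
    (hXa : ∀ w, Wz (fun v => (X 0 v : ℂ) + Complex.I * (X 1 v : ℂ)) w = φ w ^ 2)
    (hXb : ∀ w, Wzb (fun v => (X 0 v : ℂ) + Complex.I * (X 1 v : ℂ)) w = ψ w ^ 2)
    (hXc : ∀ w, Wz (fun v => (X 2 v : ℂ)) w = (starRingEnd ℂ) (ψ w) * φ w)
    (hXd : ∀ w, Wzb (fun v => (X 2 v : ℂ)) w = ψ w * (starRingEnd ℂ) (φ w)) :
    -- closedness of the two 1-forms
    (∀ w, Wzb (fun v => φ v ^ 2) w = Wz (fun v => ψ v ^ 2) w) ∧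
    (∀ w, Wzb (fun v => (starRingEnd ℂ) (ψ v) * φ v) w
        = Wz (fun v => ψ v * (starRingEnd ℂ) (φ v)) w) ∧
    -- conformality and conformal factor for the metric diag(1,1,-1)
    (∀ w, ∑ i : Fin 3, (![1, 1, -1] : Fin 3 → ℂ) i * (Wz (fun v => (X i v : ℂ)) w) ^ 2 = 0) ∧
    (∀ w, ∑ i : Fin 3, (![1, 1, -1] : Fin 3 → ℂ) i * (Wzb (fun v => (X i v : ℂ)) w) ^ 2 = 0) ∧
    (∀ w, ∑ i : Fin 3, (![1, 1, -1] : Fin 3 → ℂ) i *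
        (Wz (fun v => (X i v : ℂ)) w * Wzb (fun v => (X i v : ℂ)) w)
      = (1 / 2 : ℂ) * (((Complex.normSq (ψ w) - Complex.normSq (φ w)) ^ 2 : ℝ) : ℂ)) := by
  have hψd : Differentiable ℝ ψ := hψ.differentiable (by simp)
  have hφd : Differentiable ℝ φ := hφ.differentiable (by simp)
  have hψc : Differentiable ℝ (fun v => (starRingEnd ℂ) (ψ v)) :=
    Complex.conjCLE.differentiable.comp hψd
  have hφc : Differentiable ℝ (fun v => (starRingEnd ℂ) (φ v)) :=
    Complex.conjCLE.differentiable.comp hφd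
  have hXd' : ∀ i, Differentiable ℝ (fun v => (X i v : ℂ)) := fun i =>
    Complex.ofRealCLM.differentiable.comp ((hX i).differentiable (by simp))
  -- real-valuedness: Wzb of the coordinates is the conjugate of Wz
  have hreal : ∀ i w, Wzb (fun v => (X i v : ℂ)) w
      = (starRingEnd ℂ) (Wz (fun v => (X i v : ℂ)) w) := by
    intro i w
    have : (fun v => ((X i v : ℝ) : ℂ))
        = fun v => (starRingEnd ℂ) ((X i v : ℂ)) := by
      funext v; simp [Complex.conj_ofReal]
    conv_lhs => rw [this]
    exact Wzb_conj _ (hXd' i) w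
  -- solve for the Wirtinger derivatives of X 0 and X 1
  have key : ∀ w,
      Wz (fun v => (X 0 v : ℂ)) w
        = (φ w ^ 2 + (starRingEnd ℂ) (ψ w) ^ 2) / 2 ∧
      Wz (fun v => (X 1 v : ℂ)) w
        = -Complex.I * (φ w ^ 2 - (starRingEnd ℂ) (ψ w) ^ 2) / 2 := by
    intro w
    have eA := hXa w
    have eB := hXb w
    rw [Wz_add_I _ _ (hXd' 0) (hXd' 1)] at eA
    rw [Wzb_add_I _ _ (hXd' 0) (hXd' 1)] at eB
    rw [hreal 0 w, hreal 1 w] at eB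
    have eB' : Wz (fun v => (X 0 v : ℂ)) w - Complex.I * Wz (fun v => (X 1 v : ℂ)) w
        = (starRingEnd ℂ) (ψ w) ^ 2 := by
      have h := congrArg (starRingEnd ℂ) eB
      simp only [map_add, map_mul, map_pow, Complex.conj_I, Complex.conj_conj] at h
      linear_combination h
    constructor
    · rw [eq_div_iff (by norm_num : (2 : ℂ) ≠ 0)]
      linear_combination eA + eB'
    · rw [eq_div_iff (by norm_num : (2 : ℂ) ≠ 0)]
      linear_combination (-Complex.I) * eA + Complex.I * eB'
        + (2 * Wz (fun v => (X 1 v : ℂ)) w) * Complex.I_sq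
  refine ⟨?_, ?_, ?_, ?_, ?_⟩
  · intro w
    have l1 : Wzb (fun v => φ v ^ 2) w = 2 * φ w * Wzb φ w := by
      have : (fun v => φ v ^ 2) = fun v => φ v * φ v := by funext v; ring
      rw [this, Wzb_mul _ _ hφd hφd]; ring
    have l2 : Wz (fun v => ψ v ^ 2) w = 2 * ψ w * Wz ψ w := by
      have : (fun v => ψ v ^ 2) = fun v => ψ v * ψ v := by funext v; ring
      rw [this, Wz_mul _ _ hψd hψd]; ring
    rw [l1, l2, h1 w, h2 w]; ring
  · intro w
    rw [Wzb_mul _ _ hψc hφd, Wz_mul _ _ hψd hφc, Wzb_conj _ hψd, Wz_conj _ hφd,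
      h1 w, h2 w]
    simp only [map_mul, Complex.conj_ofReal]
    ring
  · intro w
    obtain ⟨e0, e1⟩ := key w
    rw [Fin.sum_univ_three]
    simp only [Matrix.cons_val_zero, Matrix.cons_val_one, Matrix.head_cons,
      Matrix.cons_val_two, Matrix.tail_cons]
    rw [e0, e1, hXc w]
    linear_combination ((φ w ^ 2 - (starRingEnd ℂ) (ψ w) ^ 2) ^ 2 / 4) * Complex.I_sq
  · intro w
    obtain ⟨e0, e1⟩ := key w
    rw [Fin.sum_univ_three]
    simp only [Matrix.cons_val_zero, Matrix.cons_val_one, Matrix.head_cons,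
      Matrix.cons_val_two, Matrix.tail_cons]
    rw [hreal 0 w, hreal 1 w, e0, e1, hXd w]
    simp only [map_div₀, map_add, map_sub, map_mul, map_pow, map_neg, Complex.conj_I,
      map_ofNat, Complex.conj_conj]
    linear_combination (((starRingEnd ℂ) (φ w) ^ 2 - ψ w ^ 2) ^ 2 / 4) * Complex.I_sq
  · intro w
    obtain ⟨e0, e1⟩ := key w
    rw [Fin.sum_univ_three]
    simp only [Matrix.cons_val_zero, Matrix.cons_val_one, Matrix.head_cons,
      Matrix.cons_val_two, Matrix.tail_cons]
    rw [hreal 0 w, hreal 1 w, e0, e1, hXc w, hXd w]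
    have hnψ : ((Complex.normSq (ψ w) : ℝ) : ℂ) = ψ w * (starRingEnd ℂ) (ψ w) :=
      (Complex.mul_conj (ψ w)).symm
    have hnφ : ((Complex.normSq (φ w) : ℝ) : ℂ) = φ w * (starRingEnd ℂ) (φ w) :=
      (Complex.mul_conj (φ w)).symm
    push_cast
    rw [hnψ, hnφ]
    simp only [map_div₀, map_add, map_sub, map_mul, map_pow, map_neg, Complex.conj_I,
      map_ofNat, Complex.conj_conj]
    linear_combination (-(φ w ^ 2 - (starRingEnd ℂ) (ψ w) ^ 2)
        * ((starRingEnd ℂ) (φ w) ^ 2 - ψ w ^ 2) / 4) * Complex.I_sq
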